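/- arXiv:2308.05020 — 5 statements merged into one kernel-verified Lean document; each statement's English description precedes it below -/
import Mathlib

section
/- Let G be a graph on vertices {x_1,...,x_5} forming a 5-cycle with edges x_1x_2, x_2x_3, x_3x_4, x_4x_5, x_5x_1, let w be a weight function on the edges, and let I(G_w) = ((x_1x_2)^{w_1}, (x_2x_3)^{w_2}, (x_3x_4)^{w_3}, (x_4x_5)^{w_4}, (x_5x_1)^{w_5}) in K[x_1,...,x_5]. If w_2 < w_3 (weight of x_2x_3 less than weight of x_3x_4), then the radical of the colon ideal (I(G_w) : x_3^{w_3 - 1}) equals I(G) + (x_2), where I(G) = (x_1x_2, x_2x_3, x_3x_4, x_4x_5, x_5x_1). -/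
open MvPolynomial

lemma aux_sub_mem {K : Type*} [CommRing K] (S : Set (Fin 5)) [DecidablePred (· ∈ S)]
    (f : MvPolynomial (Fin 5) K) :
    f - aeval (fun i => if i ∈ S then (0 : MvPolynomial (Fin 5) K) else X i) f
      ∈ Ideal.span (X '' S) := by
  induction f using MvPolynomial.induction_on with
  | C a => simp
  | add p q hp hq =>
      have : p + q - aeval (fun i => if i ∈ S then (0 : MvPolynomial (Fin 5) K) else X i) (p + q)
          = (p - aeval (fun i => if i ∈ S then (0 : MvPolynomial (Fin 5) K) else X i) p)
            + (q - aeval (fun i => if i ∈ S then (0 : MvPolynomial (Fin 5) K) else X i) q) := by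
        rw [map_add]; ring
      rw [this]; exact Ideal.add_mem _ hp hq
  | mul_X p i hp =>
      by_cases hi : i ∈ S
      · have hX : (X i : MvPolynomial (Fin 5) K) ∈ Ideal.span (X '' S) :=
          Ideal.subset_span ⟨i, hi, rfl⟩
        have : p * X i - aeval (fun i => if i ∈ S then (0 : MvPolynomial (Fin 5) K) else X i)
            (p * X i) = p * X i := by simp [hi]
        rw [this]; exact Ideal.mul_mem_left _ p hX
      · have : p * X i - aeval (fun i => if i ∈ S then (0 : MvPolynomial (Fin 5) K) else X i)
            (p * X i)
            = (p - aeval (fun i => if i ∈ S then (0 : MvPolynomial (Fin 5) K) else X i) p)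
              * X i := by
          rw [map_mul, aeval_X, if_neg hi]; ring
        rw [this]; exact Ideal.mul_mem_right _ _ hp

lemma span_X_eq_ker {K : Type*} [CommRing K] (S : Set (Fin 5)) [DecidablePred (· ∈ S)] :
    Ideal.span (X '' S : Set (MvPolynomial (Fin 5) K)) =
      RingHom.ker (aeval (fun i => if i ∈ S then (0 : MvPolynomial (Fin 5) K) else X i)) := by
  apply le_antisymm
  · rw [Ideal.span_le]
    rintro _ ⟨i, hi, rfl⟩
    simp [RingHom.mem_ker, hi]
  · intro f hf
    have h0 : aeval (fun i => if i ∈ S then (0 : MvPolynomial (Fin 5) K) else X i) f = 0 := hf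
    have := aux_sub_mem S f
    rwa [h0, sub_zero] at this

lemma isPrime_span_X {K : Type*} [Field K] (S : Set (Fin 5)) :
    (Ideal.span (X '' S : Set (MvPolynomial (Fin 5) K))).IsPrime := by
  classical
  rw [span_X_eq_ker]
  exact RingHom.ker_isPrime _

/-- For the weighted edge ideal of the 5-cycle
`x_1x_2, x_2x_3, x_3x_4, x_4x_5, x_5x_1` with weights `w_1,…,w_5`, if
`w_2 < w_3` then `√(I(G_w) : x_3^{w_3-1}) = I(G) + (x_2)`.
(Here `x_i = X (i-1)`.) -/
theorem stmt6 (K : Type*) [Field K] (w1 w2 w3 w4 w5 : ℕ)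
    (h1 : 0 < w1) (h2 : 0 < w2) (h3 : 0 < w3) (h4 : 0 < w4) (h5 : 0 < w5)
    (hw : w2 < w3) :
    (Submodule.colon
        (Ideal.span {((X 0 * X 1 : MvPolynomial (Fin 5) K)) ^ w1,
          (X 1 * X 2) ^ w2, (X 2 * X 3) ^ w3, (X 3 * X 4) ^ w4, (X 4 * X 0) ^ w5})
        (Ideal.span {(X 2 : MvPolynomial (Fin 5) K) ^ (w3 - 1)})).radical
      = Ideal.span {(X 0 * X 1 : MvPolynomial (Fin 5) K), X 1 * X 2, X 2 * X 3,
          X 3 * X 4, X 4 * X 0, X 1} := by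
  classical
  set I : Ideal (MvPolynomial (Fin 5) K) :=
    Ideal.span {((X 0 * X 1 : MvPolynomial (Fin 5) K)) ^ w1,
      (X 1 * X 2) ^ w2, (X 2 * X 3) ^ w3, (X 3 * X 4) ^ w4, (X 4 * X 0) ^ w5} with hI
  -- X i * X j as a monomial
  have hXm : ∀ i j : Fin 5, (X i * X j : MvPolynomial (Fin 5) K)
      = monomial (Finsupp.single i 1 + Finsupp.single j 1) 1 := by
    intro i j
    rw [← pow_one (X i : MvPolynomial (Fin 5) K), ← pow_one (X j : MvPolynomial (Fin 5) K),
      X_pow_eq_monomial, X_pow_eq_monomial, monomial_mul, one_mul]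
  have hX1m : (X 1 : MvPolynomial (Fin 5) K) = monomial (Finsupp.single 1 1) 1 := by
    rw [← pow_one (X 1 : MvPolynomial (Fin 5) K), X_pow_eq_monomial]
  -- X 2 is not in a variable ideal avoiding 2
  have hX2not : ∀ S : Set (Fin 5), (2 : Fin 5) ∉ S →
      (X 2 : MvPolynomial (Fin 5) K) ∉ Ideal.span (X '' S) := by
    intro S h2 hmem
    rw [mem_ideal_span_X_image] at hmem
    obtain ⟨i, hi, hne⟩ := hmem (Finsupp.single 2 1) (by simp [support_X])
    by_cases h : (2 : Fin 5) = i
    · exact h2 (h ▸ hi)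
    · rw [Finsupp.single_apply, if_neg h] at hne; exact hne rfl
  -- the weighted edge ideal is contained in suitable variable ideals
  have hIle : ∀ S : Set (Fin 5),
      ((0 : Fin 5) ∈ S ∨ (1 : Fin 5) ∈ S) → ((1 : Fin 5) ∈ S ∨ (2 : Fin 5) ∈ S) →
      ((2 : Fin 5) ∈ S ∨ (3 : Fin 5) ∈ S) → ((3 : Fin 5) ∈ S ∨ (4 : Fin 5) ∈ S) →
      ((4 : Fin 5) ∈ S ∨ (0 : Fin 5) ∈ S) → I ≤ Ideal.span (X '' S) := by
    intro S c1 c2 c3 c4 c5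
    have hXmem : ∀ i ∈ S, (X i : MvPolynomial (Fin 5) K) ∈ Ideal.span (X '' S) :=
      fun i hi => Ideal.subset_span ⟨i, hi, rfl⟩
    have hedge : ∀ i j : Fin 5, ∀ w : ℕ, 0 < w → (i ∈ S ∨ j ∈ S) →
        ((X i * X j : MvPolynomial (Fin 5) K)) ^ w ∈ Ideal.span (X '' S) := by
      intro i j w hw hij
      refine Ideal.pow_mem_of_mem _ ?_ _ hw
      rcases hij with h | h
      · exact Ideal.mul_mem_right _ _ (hXmem i h)
      · exact Ideal.mul_mem_left _ _ (hXmem j h)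
    rw [hI, Ideal.span_le]
    rintro g hg
    simp only [Set.mem_insert_iff, Set.mem_singleton_iff] at hg
    rcases hg with rfl | rfl | rfl | rfl | rfl
    exacts [hedge _ _ _ h1 c1, hedge _ _ _ h2 c2, hedge _ _ _ h3 c3,
      hedge _ _ _ h4 c4, hedge _ _ _ h5 c5]
  -- colon is contained in variable prime ideals avoiding 2
  have hcolP : ∀ S : Set (Fin 5), I ≤ Ideal.span (X '' S) → (2 : Fin 5) ∉ S →
      Submodule.colon I (Ideal.span {(X 2 : MvPolynomial (Fin 5) K) ^ (w3 - 1)})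
        ≤ Ideal.span (X '' S) := by
    intro S hIS h2 f hf
    have h := Ideal.mem_colon_span_singleton.1 hf
    rcases (isPrime_span_X S).mem_or_mem (hIS h) with h' | h'
    · exact h'
    · exact absurd ((isPrime_span_X S).mem_of_pow_mem _ h') (hX2not S h2)
  have hnotmem : ∀ (i : Fin 5) (a b c : Fin 5), i ≠ a → i ≠ b → i ≠ c →
      i ∉ ({a, b, c} : Set (Fin 5)) := by
    intro i a b c ha hb hc h
    simp only [Set.mem_insert_iff, Set.mem_singleton_iff] at h
    tauto
  have hP1 : Submodule.colon I (Ideal.span {(X 2 : MvPolynomial (Fin 5) K) ^ (w3 - 1)})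
      ≤ Ideal.span (X '' ({1, 3, 4} : Set (Fin 5))) :=
    hcolP _ (hIle _ (Or.inr (by simp)) (Or.inl (by simp)) (Or.inr (by simp))
      (Or.inl (by simp)) (Or.inl (by simp)))
      (hnotmem _ _ _ _ (by decide) (by decide) (by decide))
  have hP2 : Submodule.colon I (Ideal.span {(X 2 : MvPolynomial (Fin 5) K) ^ (w3 - 1)})
      ≤ Ideal.span (X '' ({0, 1, 3} : Set (Fin 5))) :=
    hcolP _ (hIle _ (Or.inl (by simp)) (Or.inl (by simp)) (Or.inr (by simp))
      (Or.inl (by simp)) (Or.inr (by simp)))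
      (hnotmem _ _ _ _ (by decide) (by decide) (by decide))
  -- colon ≤ (X1, X2, X4), the prime containing X2
  have hP3 : Submodule.colon I (Ideal.span {(X 2 : MvPolynomial (Fin 5) K) ^ (w3 - 1)})
      ≤ Ideal.span (X '' ({1, 2, 4} : Set (Fin 5))) := by
    intro f hf
    have h := Ideal.mem_colon_span_singleton.1 hf
    set τ : MvPolynomial (Fin 5) K →ₐ[K] MvPolynomial (Fin 5) K :=
      aeval (fun i => if i ∈ ({1, 4} : Set (Fin 5)) then (0 : MvPolynomial (Fin 5) K) else X i)
      with hτ
    have hmap : τ (f * X 2 ^ (w3 - 1)) ∈ Ideal.map τ I := Ideal.mem_map_of_mem τ h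
    have τX : ∀ i : Fin 5, τ (X i)
        = if i ∈ ({1, 4} : Set (Fin 5)) then (0 : MvPolynomial (Fin 5) K) else X i := by
      intro i; rw [hτ]; exact aeval_X _ i
    have hnm : ∀ i : Fin 5, i ≠ 1 → i ≠ 4 → i ∉ ({1, 4} : Set (Fin 5)) := by
      intro i ha hb h
      simp only [Set.mem_insert_iff, Set.mem_singleton_iff] at h
      tauto
    have τX0 : τ (X 0) = X 0 := by rw [τX, if_neg (hnm _ (by decide) (by decide))]
    have τX1 : τ (X 1) = 0 := by rw [τX, if_pos (Set.mem_insert _ _)]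
    have τX2 : τ (X 2) = X 2 := by rw [τX, if_neg (hnm _ (by decide) (by decide))]
    have τX3 : τ (X 3) = X 3 := by rw [τX, if_neg (hnm _ (by decide) (by decide))]
    have τX4 : τ (X 4) = 0 := by
      rw [τX, if_pos (Set.mem_insert_iff.2 (Or.inr (Set.mem_singleton _)))]
    have hmaple : Ideal.map τ I ≤ Ideal.span {((X 2 * X 3 : MvPolynomial (Fin 5) K)) ^ w3} := by
      rw [hI, Ideal.map_span, Ideal.span_le]
      rintro _ ⟨g, hg, rfl⟩
      simp only [Set.mem_insert_iff, Set.mem_singleton_iff] at hg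
      rcases hg with rfl | rfl | rfl | rfl | rfl
      · rw [map_pow, map_mul, τX0, τX1, mul_zero, zero_pow h1.ne']
        exact Ideal.zero_mem _
      · rw [map_pow, map_mul, τX1, τX2, zero_mul, zero_pow h2.ne']
        exact Ideal.zero_mem _
      · rw [map_pow, map_mul, τX2, τX3]
        exact Ideal.subset_span rfl
      · rw [map_pow, map_mul, τX3, τX4, mul_zero, zero_pow h4.ne']
        exact Ideal.zero_mem _
      · rw [map_pow, map_mul, τX4, τX0, zero_mul, zero_pow h5.ne']
        exact Ideal.zero_mem _
    have hτ2 : τ (X 2) = X 2 := τX2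
    have hmem : τ f * (X 2 : MvPolynomial (Fin 5) K) ^ (w3 - 1)
        ∈ Ideal.span {((X 2 * X 3 : MvPolynomial (Fin 5) K)) ^ w3} := by
      have := hmaple hmap
      rwa [map_mul, map_pow, hτ2] at this
    rw [Ideal.mem_span_singleton] at hmem
    obtain ⟨c, hc⟩ := hmem
    have hX2ne : ((X 2 : MvPolynomial (Fin 5) K)) ^ (w3 - 1) ≠ 0 :=
      pow_ne_zero _ (X_ne_zero _)
    have key : τ f = X 2 * (X 3 ^ w3 * c) := by
      apply mul_right_cancel₀ hX2ne
      rw [hc]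
      have e1 : ((X 2 : MvPolynomial (Fin 5) K) * X 3) ^ w3
          = X 2 * X 3 ^ w3 * X 2 ^ (w3 - 1) := by
        rw [mul_pow]
        nth_rewrite 1 [show w3 = (w3 - 1) + 1 from by omega]
        ring
      rw [e1]; ring
    have hτf : τ f ∈ Ideal.span (X '' ({1, 2, 4} : Set (Fin 5))) := by
      rw [key]
      exact Ideal.mul_mem_right _ _ (Ideal.subset_span ⟨2, Set.mem_insert_iff.2 (Or.inr (Set.mem_insert _ _)), rfl⟩)
    have hsub := aux_sub_mem ({1, 4} : Set (Fin 5)) f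
    have hmono : Ideal.span (X '' ({1, 4} : Set (Fin 5)))
        ≤ Ideal.span (X '' ({1, 2, 4} : Set (Fin 5)) : Set (MvPolynomial (Fin 5) K)) := by
      apply Ideal.span_mono
      apply Set.image_mono
      intro x hx
      simp only [Set.mem_insert_iff, Set.mem_singleton_iff] at hx ⊢
      tauto
    have hfeq : f = (f - aeval
        (fun i => if i ∈ ({1, 4} : Set (Fin 5)) then (0 : MvPolynomial (Fin 5) K) else X i) f)
        + τ f := by
      rw [hτ]; ring
    rw [hfeq]
    exact Ideal.add_mem _ (hmono hsub) hτf
  -- rewrite the target as a monomial ideal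
  have himg : (Ideal.span {(X 0 * X 1 : MvPolynomial (Fin 5) K), X 1 * X 2, X 2 * X 3,
        X 3 * X 4, X 4 * X 0, X 1})
      = Ideal.span ((fun s => monomial s (1 : K)) ''
          ({Finsupp.single 0 1 + Finsupp.single 1 1, Finsupp.single 1 1 + Finsupp.single 2 1,
            Finsupp.single 2 1 + Finsupp.single 3 1, Finsupp.single 3 1 + Finsupp.single 4 1,
            Finsupp.single 4 1 + Finsupp.single 0 1,
            Finsupp.single 1 1} : Set (Fin 5 →₀ ℕ))) := by
    congr 1
    simp only [Set.image_insert_eq, Set.image_singleton]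
    rw [hXm 0 1, hXm 1 2, hXm 2 3, hXm 3 4, hXm 4 0, hX1m]
  apply le_antisymm
  · -- radical colon ≤ target
    have hrad : ∀ S : Set (Fin 5),
        Submodule.colon I (Ideal.span {(X 2 : MvPolynomial (Fin 5) K) ^ (w3 - 1)})
          ≤ Ideal.span (X '' S) →
        (Submodule.colon I
            (Ideal.span {(X 2 : MvPolynomial (Fin 5) K) ^ (w3 - 1)})).radical
          ≤ Ideal.span (X '' S) := by
      intro S hS
      rw [← (isPrime_span_X S).radical]
      exact Ideal.radical_mono hS
    intro f hf
    have hf1 := hrad _ hP1 hf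
    have hf2 := hrad _ hP2 hf
    have hf3 := hrad _ hP3 hf
    rw [mem_ideal_span_X_image] at hf1 hf2 hf3
    rw [himg, mem_ideal_span_monomial_image]
    intro m hm
    -- translate the three constraints
    have c1 : m 1 ≠ 0 ∨ m 3 ≠ 0 ∨ m 4 ≠ 0 := by
      obtain ⟨i, hi, hne⟩ := hf1 m hm
      simp only [Set.mem_insert_iff, Set.mem_singleton_iff] at hi
      rcases hi with rfl | rfl | rfl
      exacts [Or.inl hne, Or.inr (Or.inl hne), Or.inr (Or.inr hne)]
    have c2 : m 0 ≠ 0 ∨ m 1 ≠ 0 ∨ m 3 ≠ 0 := by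
      obtain ⟨i, hi, hne⟩ := hf2 m hm
      simp only [Set.mem_insert_iff, Set.mem_singleton_iff] at hi
      rcases hi with rfl | rfl | rfl
      exacts [Or.inl hne, Or.inr (Or.inl hne), Or.inr (Or.inr hne)]
    have c3 : m 1 ≠ 0 ∨ m 2 ≠ 0 ∨ m 4 ≠ 0 := by
      obtain ⟨i, hi, hne⟩ := hf3 m hm
      simp only [Set.mem_insert_iff, Set.mem_singleton_iff] at hi
      rcases hi with rfl | rfl | rfl
      exacts [Or.inl hne, Or.inr (Or.inl hne), Or.inr (Or.inr hne)]
    have hle : ∀ i j : Fin 5, i ≠ j → m i ≠ 0 → m j ≠ 0 →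
        Finsupp.single i 1 + Finsupp.single j 1 ≤ m := by
      intro i j hij hi hj
      intro k
      rw [Finsupp.add_apply, Finsupp.single_apply, Finsupp.single_apply]
      split_ifs with hik hjk hjk
      · exact absurd (hik.trans hjk.symm) hij
      · subst hik; omega
      · subst hjk; omega
      · omega
    by_cases hm1 : m 1 = 0
    · have c1' : m 3 ≠ 0 ∨ m 4 ≠ 0 := by
        rcases c1 with h | h | h
        exacts [absurd hm1 h, Or.inl h, Or.inr h]
      have c2' : m 0 ≠ 0 ∨ m 3 ≠ 0 := by
        rcases c2 with h | h | h
        exacts [Or.inl h, absurd hm1 h, Or.inr h]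
      have c3' : m 2 ≠ 0 ∨ m 4 ≠ 0 := by
        rcases c3 with h | h | h
        exacts [absurd hm1 h, Or.inl h, Or.inr h]
      by_cases hm3 : m 3 = 0
      · have hm4 : m 4 ≠ 0 := c1'.resolve_left (not_not_intro hm3)
        have hm0 : m 0 ≠ 0 := c2'.resolve_right (not_not_intro hm3)
        exact ⟨Finsupp.single 4 1 + Finsupp.single 0 1,
          Set.mem_insert_iff.2 <| Or.inr <| Set.mem_insert_iff.2 <| Or.inr <|
            Set.mem_insert_iff.2 <| Or.inr <| Set.mem_insert_iff.2 <| Or.inr <|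
            Set.mem_insert _ _,
          hle 4 0 (by decide) hm4 hm0⟩
      · rcases c3' with hm2 | hm4
        · exact ⟨Finsupp.single 2 1 + Finsupp.single 3 1,
            Set.mem_insert_iff.2 <| Or.inr <| Set.mem_insert_iff.2 <| Or.inr <|
              Set.mem_insert _ _,
            hle 2 3 (by decide) hm2 hm3⟩
        · exact ⟨Finsupp.single 3 1 + Finsupp.single 4 1,
            Set.mem_insert_iff.2 <| Or.inr <| Set.mem_insert_iff.2 <| Or.inr <|
              Set.mem_insert_iff.2 <| Or.inr <| Set.mem_insert _ _,
            hle 3 4 (by decide) hm3 hm4⟩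
    · exact ⟨Finsupp.single 1 1,
        Set.mem_insert_iff.2 <| Or.inr <| Set.mem_insert_iff.2 <| Or.inr <|
          Set.mem_insert_iff.2 <| Or.inr <| Set.mem_insert_iff.2 <| Or.inr <|
          Set.mem_insert_iff.2 <| Or.inr <| Set.mem_singleton _,
        Finsupp.single_le_iff.2 (by omega)⟩
  · -- target ≤ radical colon
    rw [Ideal.span_le]
    have hbase : ∀ g : MvPolynomial (Fin 5) K, ∀ n : ℕ,
        g ^ n * (X 2 : MvPolynomial (Fin 5) K) ^ (w3 - 1) ∈ I →
        g ∈ (Submodule.colon I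
            (Ideal.span {(X 2 : MvPolynomial (Fin 5) K) ^ (w3 - 1)})).radical := by
      intro g n hg
      exact ⟨n, Ideal.mem_colon_span_singleton.2 hg⟩
    intro g hg
    simp only [Set.mem_insert_iff, Set.mem_singleton_iff] at hg
    have hgen : ∀ p ∈ ({((X 0 * X 1 : MvPolynomial (Fin 5) K)) ^ w1,
          (X 1 * X 2) ^ w2, (X 2 * X 3) ^ w3, (X 3 * X 4) ^ w4,
          (X 4 * X 0) ^ w5} : Set (MvPolynomial (Fin 5) K)), p ∈ I :=
      fun p hp => Ideal.subset_span hp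
    rcases hg with rfl | rfl | rfl | rfl | rfl | rfl
    · exact hbase _ w1 (Ideal.mul_mem_right _ _ (hgen _ (by simp)))
    · exact hbase _ w2 (Ideal.mul_mem_right _ _ (hgen _ (by simp)))
    · exact hbase _ w3 (Ideal.mul_mem_right _ _ (hgen _ (by simp)))
    · exact hbase _ w4 (Ideal.mul_mem_right _ _ (hgen _ (by simp)))
    · exact hbase _ w5 (Ideal.mul_mem_right _ _ (hgen _ (by simp)))
    · refine hbase _ w2 ?_
      have e : (X 1 : MvPolynomial (Fin 5) K) ^ w2 * X 2 ^ (w3 - 1)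
          = (X 1 * X 2) ^ w2 * X 2 ^ (w3 - 1 - w2) := by
        rw [mul_pow, mul_assoc, ← pow_add]
        congr 2
        omega
      rw [e]
      exact Ideal.mul_mem_right _ _ (hgen _ (by simp))
end

section
/- Let G be a simple graph with weight function w: E(G) -> Z_{>0}, and let x^a be a monomial not in I(G_w). Then the radical of (I(G_w) : x^a) is generated by a set of monomials each of which is either a single variable or a product x_i x_j corresponding to an edge of G; consequently sqrt(I(G_w) : x^a) = I(G[W]) + (a set of variables) for some subset W of V(G). -/
/-!
Colon ideals and radicals of monomial ideals are again monomial: `(J : x^a)` is generated by the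
`x^(d - a)` for the generators `x^d` of `J`, and its radical by their squarefree parts, because a
squarefree monomial ideal is radical (if `f^k` lies in it, so does the leading term of `f`).
For the generator `(x_i x_j)^c` of `I(G_w)` the squarefree part of `x^(c(e_i + e_j) - a)` is
`x_i^[a_i < c] x_j^[a_j < c]`, which is never `1` because `x^a ∉ I(G_w)`. So every generator of the
radical is an edge monomial or a variable `x_j` with a neighbour `i` such that `w_ij ≤ a_i`, and
one can take `W = V`.
-/

open MvPolynomial

namespace Finsupp

variable {σ : Type*}

noncomputable def squarefreePart (d : σ →₀ ℕ) : σ →₀ ℕ := d.mapRange (min · 1) (by simp)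

@[simp]
theorem squarefreePart_apply (d : σ →₀ ℕ) (i : σ) : d.squarefreePart i = min (d i) 1 := rfl

theorem squarefreePart_le (d : σ →₀ ℕ) : d.squarefreePart ≤ d := fun _ => min_le_left _ _

theorem le_nsmul_squarefreePart (d : σ →₀ ℕ) : d ≤ d.degree • d.squarefreePart := by
  intro i
  have := le_degree i d
  simp only [smul_apply, squarefreePart_apply, smul_eq_mul]
  rcases Nat.eq_zero_or_pos (d i) with h | h
  · simp [h]
  · rw [min_eq_right h]; omega

theorem le_of_le_nsmul_of_le_one {d e : σ →₀ ℕ} {k : ℕ} (hd : ∀ i, d i ≤ 1) (h : d ≤ k • e) :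
    d ≤ e := by
  intro i
  have h1 := hd i
  have h2 : d i ≤ k * e i := h i
  rcases Nat.eq_zero_or_pos (e i) with h | h
  · simp_all
  · omega

theorem nsmul_single_add_single_le {i j : σ} (hij : i ≠ j) {c : ℕ} {a : σ →₀ ℕ} (hi : c ≤ a i)
    (hj : c ≤ a j) : c • (single i 1 + single j 1) ≤ a := by
  classical
  intro t
  simp only [smul_apply, add_apply, single_apply, smul_eq_mul]
  split_ifs <;> subst_vars <;> simp_all

theorem squarefreePart_nsmul_single_add_single_tsub {i j : σ} (hij : i ≠ j) (c : ℕ) (a : σ →₀ ℕ) :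
    (c • (single i 1 + single j 1) - a).squarefreePart =
      (if a i < c then single i 1 else 0) + (if a j < c then single j 1 else 0) := by
  classical
  ext t
  simp only [squarefreePart_apply, tsub_apply, smul_apply, add_apply, single_apply, smul_eq_mul]
  split_ifs <;> subst_vars <;> simp_all <;> omega

end Finsupp

namespace MvPolynomial

variable {σ R : Type*}

section CommSemiring

variable [CommSemiring R]

variable (R) in
noncomputable def monomialIdeal (E : Set (σ →₀ ℕ)) : Ideal (MvPolynomial σ R) :=
  Ideal.span ((fun d => monomial d 1) '' E)

theorem monomial_mem_monomialIdeal {E : Set (σ →₀ ℕ)} {d e : σ →₀ ℕ} (hd : d ∈ E) (h : d ≤ e)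
    (r : R) : monomial e r ∈ monomialIdeal R E := by
  classical
  refine mem_ideal_span_monomial_image.mpr fun b hb => ⟨d, hd, ?_⟩
  rwa [Finset.mem_singleton.mp (support_monomial_subset hb)]

theorem monomialIdeal_mono {E F : Set (σ →₀ ℕ)} (h : ∀ d ∈ E, ∃ e ∈ F, e ≤ d) :
    monomialIdeal R E ≤ monomialIdeal R F := by
  refine Ideal.span_le.mpr ?_
  rintro _ ⟨d, hd, rfl⟩
  obtain ⟨e, he, hed⟩ := h d hd
  exact monomial_mem_monomialIdeal he hed 1

theorem support_mul_monomial_one (f : MvPolynomial σ R) (a : σ →₀ ℕ) :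
    (f * monomial a 1).support = f.support.map (addRightEmbedding a) :=
  AddMonoidAlgebra.support_coeff_mul_single f 1 (by simp) a

theorem colon_monomialIdeal_span_monomial (E : Set (σ →₀ ℕ)) (a : σ →₀ ℕ) :
    (monomialIdeal R E).colon (Ideal.span {monomial a (1 : R)}) =
      monomialIdeal R ((· - a) '' E) := by
  ext f
  simp only [Ideal.mem_colon_span_singleton, monomialIdeal, mem_ideal_span_monomial_image,
    support_mul_monomial_one, Finset.forall_mem_map, Set.exists_mem_image, addRightEmbedding_apply,
    tsub_le_iff_right]

theorem X_mul_X_pow_eq_monomial (i j : σ) (c : ℕ) :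
    (X i * X j : MvPolynomial σ R) ^ c =
      monomial (c • (Finsupp.single i 1 + Finsupp.single j 1)) 1 := by
  rw [X, X, monomial_mul, one_mul, monomial_pow, one_pow]

theorem prod_X_pow_eq_monomial_equivFunOnFinite [Fintype σ] (a : σ → ℕ) :
    ∏ i, (X i : MvPolynomial σ R) ^ a i = monomial (Finsupp.equivFunOnFinite.symm a) 1 := by
  rw [monomial_eq, C_1, one_mul, Finsupp.prod_fintype _ _ fun _ => pow_zero _]
  rfl

theorem leadingTerm_mem_monomialIdeal_of_pow_mem [IsReduced R] (m : MonomialOrder σ)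
    {E : Set (σ →₀ ℕ)} (hE : ∀ d ∈ E, ∀ i, d i ≤ 1) {f : MvPolynomial σ R} {k : ℕ}
    (hk : f ^ k ∈ monomialIdeal R E) :
    m.leadingTerm f ∈ monomialIdeal R E := by
  by_cases hf : f = 0
  · simp [hf]
  have hdeg : k • m.degree f ∈ (f ^ k).support := by
    rw [mem_support_iff, m.coeff_pow_nsmul_degree]
    exact pow_ne_zero k (m.leadingCoeff_ne_zero_iff.mpr hf)
  obtain ⟨d, hd, hdk⟩ := mem_ideal_span_monomial_image.mp hk _ hdeg
  exact monomial_mem_monomialIdeal hd (Finsupp.le_of_le_nsmul_of_le_one (hE d hd) hdk) _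

end CommSemiring

section CommRing

variable [CommRing R] [IsReduced R] [LinearOrder σ] [WellFoundedGT σ]

theorem isRadical_monomialIdeal {E : Set (σ →₀ ℕ)} (hE : ∀ d ∈ E, ∀ i, d i ≤ 1) :
    (monomialIdeal R E).IsRadical := by
  let m : MonomialOrder σ := .lex
  intro f hf
  induction hδ : m.toSyn (m.degree f) using WellFoundedLT.induction generalizing f with
  | ind δ ih =>
  obtain ⟨k, hk⟩ := hf
  have hlead := leadingTerm_mem_monomialIdeal_of_pow_mem m hE hk
  rw [← sub_add_cancel f (m.leadingTerm f)]
  refine add_mem ?_ hlead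
  by_cases h0 : f - m.leadingTerm f = 0
  · rw [h0]; exact zero_mem _
  have hlt := m.degree_sub_leadingTerm_lt_degree (m.degree_ne_zero_of_sub_leadingTerm_ne_zero h0)
  exact ih _ (hδ ▸ hlt) (sub_mem ⟨k, hk⟩ (Ideal.le_radical hlead)) rfl

theorem radical_monomialIdeal (E : Set (σ →₀ ℕ)) :
    (monomialIdeal R E).radical = monomialIdeal R (Finsupp.squarefreePart '' E) := by
  apply le_antisymm
  · have hle : monomialIdeal R E ≤ monomialIdeal R (Finsupp.squarefreePart '' E) :=
      monomialIdeal_mono fun d hd => ⟨_, Set.mem_image_of_mem _ hd, d.squarefreePart_le⟩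
    refine (Ideal.radical_mono hle).trans (isRadical_monomialIdeal ?_).radical.le
    rintro _ ⟨d, -, rfl⟩ i
    exact min_le_right _ _
  · refine Ideal.span_le.mpr ?_
    rintro _ ⟨_, ⟨d, hd, rfl⟩, rfl⟩
    refine ⟨d.degree, ?_⟩
    rw [monomial_pow, one_pow]
    exact monomial_mem_monomialIdeal hd d.le_nsmul_squarefreePart 1

end CommRing

section EdgeIdeal

open Finsupp

variable [CommSemiring R] {V : Type*} (G : SimpleGraph V)

theorem span_weightedEdges_eq_monomialIdeal (w : V → V → ℕ) :
    Ideal.span {p : MvPolynomial V R | ∃ i j, G.Adj i j ∧ p = (X i * X j) ^ w i j} =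
      monomialIdeal R {d | ∃ i j, G.Adj i j ∧ d = w i j • (single i 1 + single j 1)} := by
  unfold monomialIdeal
  congr 1
  ext p
  simp [X_mul_X_pow_eq_monomial, eq_comm]

theorem span_edges_union_X_eq_monomialIdeal (W Y : Set V) :
    Ideal.span ({p : MvPolynomial V R | ∃ i j, i ∈ W ∧ j ∈ W ∧ G.Adj i j ∧ p = X i * X j} ∪
        X '' Y) =
      monomialIdeal R ({d | ∃ i j, i ∈ W ∧ j ∈ W ∧ G.Adj i j ∧ d = single i 1 + single j 1} ∪
        (single · 1) '' Y) := by
  unfold monomialIdeal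
  rw [Set.image_union, Set.image_image]
  congr 2
  ext p
  simp [X, monomial_mul, eq_comm, and_assoc]

theorem monomialIdeal_squarefreePart_weightedEdges_tsub {w : V → V → ℕ}
    (hsym : ∀ i j, w i j = w j i) {a : V →₀ ℕ}
    (hlt_of_le : ∀ i j, G.Adj i j → w i j ≤ a i → a j < w i j) :
    monomialIdeal R (squarefreePart '' ((· - a) ''
        {d | ∃ i j, G.Adj i j ∧ d = w i j • (single i 1 + single j 1)})) =
      monomialIdeal R ({d | ∃ i j, G.Adj i j ∧ d = single i 1 + single j 1} ∪
        (single · 1) '' {j | ∃ i, G.Adj i j ∧ w i j ≤ a i}) := by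
  apply le_antisymm <;> apply monomialIdeal_mono
  · rintro _ ⟨_, ⟨_, ⟨i, j, hij, rfl⟩, rfl⟩, rfl⟩
    refine ⟨_, ?_, le_rfl⟩
    rw [squarefreePart_nsmul_single_add_single_tsub hij.ne]
    by_cases hi : w i j ≤ a i
    · rw [if_neg hi.not_gt, if_pos (hlt_of_le i j hij hi), zero_add]
      exact Or.inr ⟨j, ⟨i, hij, hi⟩, rfl⟩
    by_cases hj : w i j ≤ a j
    · rw [hsym] at hj ⊢
      rw [if_pos (hlt_of_le j i hij.symm hj), if_neg hj.not_gt, add_zero]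
      exact Or.inr ⟨i, ⟨j, hij.symm, hj⟩, rfl⟩
    · rw [if_pos (not_le.mp hi), if_pos (not_le.mp hj)]
      exact Or.inl ⟨i, j, hij, rfl⟩
  · rintro _ (⟨i, j, hij, rfl⟩ | ⟨j, ⟨i, hij, hi⟩, rfl⟩) <;>
      refine ⟨_, ⟨_, ⟨_, ⟨i, j, hij, rfl⟩, rfl⟩, rfl⟩, ?_⟩ <;>
      rw [squarefreePart_nsmul_single_add_single_tsub hij.ne]
    · gcongr <;> split_ifs <;> simp
    · rw [if_neg hi.not_gt, zero_add]
      split_ifs <;> simp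

end EdgeIdeal

end MvPolynomial

theorem stmt7_general (K : Type*) [Field K] (n : ℕ) (G : SimpleGraph (Fin n))
    (w : Fin n → Fin n → ℕ) (hsym : ∀ i j, w i j = w j i)
    (I : Ideal (MvPolynomial (Fin n) K))
    (hI : I = Ideal.span {p | ∃ i j, G.Adj i j ∧ p = (X i * X j) ^ w i j})
    (a : Fin n → ℕ)
    (ha : (∏ i, (X i : MvPolynomial (Fin n) K) ^ a i) ∉ I) :
    ∃ W Y : Set (Fin n),
      (Submodule.colon I
          (Ideal.span {∏ i, (X i : MvPolynomial (Fin n) K) ^ a i})).radical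
        = Ideal.span ({p | ∃ i j, i ∈ W ∧ j ∈ W ∧ G.Adj i j ∧ p = X i * X j}
            ∪ (fun i => (X i : MvPolynomial (Fin n) K)) '' Y) := by
  rw [prod_X_pow_eq_monomial_equivFunOnFinite, hI, span_weightedEdges_eq_monomialIdeal] at ha ⊢
  set a' := Finsupp.equivFunOnFinite.symm a
  have hlt_of_le : ∀ i j, G.Adj i j → w i j ≤ a' i → a' j < w i j := by
    intro i j hij hi
    by_contra! hj
    refine ha (monomial_mem_monomialIdeal ?_ (Finsupp.nsmul_single_add_single_le hij.ne hi hj) 1)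
    exact ⟨i, j, hij, rfl⟩
  refine ⟨Set.univ, {j | ∃ i, G.Adj i j ∧ w i j ≤ a' i}, ?_⟩
  rw [colon_monomialIdeal_span_monomial, radical_monomialIdeal,
    span_edges_union_X_eq_monomialIdeal]
  simpa only [Set.mem_univ, true_and] using
    monomialIdeal_squarefreePart_weightedEdges_tsub G hsym hlt_of_le

/-- For any edge weight function `w` on a simple graph `G` and
any monomial `x^a ∉ I(G_w)`, the radical `√(I(G_w) : x^a)` equals
`I(G[W]) + (a set of variables)` for some subset `W` of the vertices; in
particular it is generated by variables and edge monomials of `G`. -/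
theorem stmt7 (K : Type*) [Field K] (n : ℕ) (G : SimpleGraph (Fin n))
    (w : Fin n → Fin n → ℕ) (hsym : ∀ i j, w i j = w j i)
    (hpos : ∀ i j, G.Adj i j → 0 < w i j)
    (I : Ideal (MvPolynomial (Fin n) K))
    (hI : I = Ideal.span {p | ∃ i j, G.Adj i j ∧ p = (X i * X j) ^ w i j})
    (a : Fin n → ℕ)
    (ha : (∏ i, (X i : MvPolynomial (Fin n) K) ^ a i) ∉ I) :
    ∃ W Y : Set (Fin n),
      (Submodule.colon I
          (Ideal.span {∏ i, (X i : MvPolynomial (Fin n) K) ^ a i})).radical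
        = Ideal.span ({p | ∃ i j, i ∈ W ∧ j ∈ W ∧ G.Adj i j ∧ p = X i * X j}
            ∪ (fun i => (X i : MvPolynomial (Fin n) K)) '' Y) :=
  stmt7_general K n G w hsym I hI a ha
end

section
/- Let H be the suspension of the cycle C_t (t >= 3): vertices x_1,...,x_t,y_1,...,y_t, edges x_ix_{i+1} (indices mod t) and x_iy_i for all i. Let w be a weight function assigning weight w >= 2 to each cycle edge x_ix_{i+1} and weight 1 to each pendant edge x_iy_i, and let I(H_w) be the corresponding weighted edge ideal. Then sqrt(I(H_w) : (x_1...x_t)^{w-1}) = I(C_t) + (y_1,...,y_t), where I(C_t) = (x_1x_2,...,x_{t-1}x_t,x_tx_1). -/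
/-!
The colon of a monomial ideal by a monomial `x^d` is generated by the monomials `x^(a - d)`.
As `w - 1 ≥ 1` and `x_i ≠ x_{i+1}`, dividing `(x_i x_{i+1})^w` and `x_i y_i` by `(x_1 ⋯ x_t)^(w-1)`
leaves `x_i x_{i+1}` and `y_i`, so the colon ideal is already `I(C_t) + (y_1, …, y_t)`.
That ideal is generated by squarefree monomials, hence radical: if `g^n` lies in it, the leading
monomial `n • a` of `g^n` is divisible by a squarefree generator, which then divides `x^a`; so the
leading term of `g` lies in the ideal, and one concludes by induction on the number of terms of `g`.
-/

open MvPolynomial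

universe u

theorem MonomialOrder.nonempty (σ : Type u) : Nonempty (MonomialOrder.{u, u} σ) :=
  let _ : LinearOrder σ := WellOrderingRel.isWellOrder.linearOrder
  let _ : LinearOrder σ := (inferInstance : LinearOrder σᵒᵈ)
  ⟨@MonomialOrder.lex σ _ ⟨WellOrderingRel.isWellOrder.wf⟩⟩

theorem MonomialOrder.card_support_sub_leadingTerm_lt {σ R : Type*} [CommRing R]
    (m : MonomialOrder σ) {f : MvPolynomial σ R} (hf : f ≠ 0) :
    (f - m.leadingTerm f).support.card < f.support.card := by
  classical
  have hsupp : (f - m.leadingTerm f).support ⊆ f.support.erase (m.degree f) := by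
    intro b hb
    rw [mem_support_iff, coeff_sub, MonomialOrder.leadingTerm, coeff_monomial] at hb
    rw [Finset.mem_erase, mem_support_iff]
    split_ifs at hb with h
    · simp [← h, MonomialOrder.leadingCoeff] at hb
    · exact ⟨Ne.symm h, by simpa using hb⟩
  exact (Finset.card_le_card hsupp).trans_lt
    (Finset.card_erase_lt_of_mem (m.degree_mem_support hf))

theorem Finsupp.le_of_le_nsmul_of_le_one_s9 {σ : Type*} {s a : σ →₀ ℕ} {n : ℕ}
    (hs : ∀ i, s i ≤ 1) (h : s ≤ n • a) : s ≤ a := fun i => by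
  have hi : s i ≤ n * a i := h i
  rcases Nat.eq_zero_or_pos (a i) with h0 | h0
  · simpa [h0] using hi
  · exact (hs i).trans h0

theorem Fin.self_ne_add_one {n : ℕ} [NeZero n] (hn : 1 < n) (i : Fin n) : i ≠ i + 1 := fun h => by
  have := Fin.one_eq_zero_iff.mp (left_eq_add.mp h)
  omega

namespace MvPolynomial

variable {σ : Type u} {ι R : Type*}

theorem setOf_exists_eq_monomial [CommSemiring R] (e : ι → σ →₀ ℕ) :
    {p | ∃ i, p = monomial (e i) (1 : R)} = (fun s => monomial s 1) '' Set.range e := by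
  ext
  simp [eq_comm]

theorem setOf_exists_eq_X [CommSemiring R] (f : ι → σ) :
    {p | ∃ i, p = (X (f i) : MvPolynomial σ R)} =
      (fun s => monomial s 1) '' Set.range (fun i => Finsupp.single (f i) 1) :=
  setOf_exists_eq_monomial _

theorem colon_span_monomial_image [CommSemiring R] (S : Set (σ →₀ ℕ)) (d : σ →₀ ℕ) :
    Submodule.colon (Ideal.span ((fun s => monomial s (1 : R)) '' S))
        (Ideal.span {monomial d (1 : R)}) =
      Ideal.span ((fun s => monomial s (1 : R)) '' ((· - d) '' S)) := by
  apply le_antisymm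
  · intro g hg
    rw [Ideal.mem_colon_span_singleton, mem_ideal_span_monomial_image] at hg
    rw [mem_ideal_span_monomial_image]
    intro a ha
    obtain ⟨s, hs, hle⟩ := hg (a + d) (by simpa [coeff_mul_monomial] using ha)
    exact ⟨s - d, ⟨s, hs, rfl⟩, tsub_le_iff_right.mpr hle⟩
  · rw [Ideal.span_le, Set.image_image]
    rintro _ ⟨s, hs, rfl⟩
    rw [SetLike.mem_coe, Ideal.mem_colon_span_singleton, monomial_mul, one_mul,
      mem_ideal_span_monomial_image]
    intro a ha
    rw [Finset.mem_singleton.mp (support_monomial_subset ha)]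
    exact ⟨s, hs, le_tsub_add⟩

theorem leadingTerm_mem_of_mem_radical_span_monomial_image [CommSemiring R] [IsReduced R]
    (m : MonomialOrder σ) {S : Set (σ →₀ ℕ)} (hS : ∀ s ∈ S, ∀ i, s i ≤ 1)
    {g : MvPolynomial σ R} (hg : g ∈ (Ideal.span ((fun s => monomial s (1 : R)) '' S)).radical) :
    m.leadingTerm g ∈ Ideal.span ((fun s => monomial s (1 : R)) '' S) := by
  obtain ⟨n, hn⟩ := hg
  rcases eq_or_ne g 0 with rfl | hg0
  · simp
  have hdeg : n • m.degree g ∈ (g ^ n).support := by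
    rw [mem_support_iff, MonomialOrder.coeff_pow_nsmul_degree]
    exact pow_ne_zero n (m.leadingCoeff_ne_zero_iff.mpr hg0)
  obtain ⟨s, hs, hle⟩ := mem_ideal_span_monomial_image.mp hn _ hdeg
  rw [mem_ideal_span_monomial_image]
  intro a ha
  rw [Finset.mem_singleton.mp (support_monomial_subset ha)]
  exact ⟨s, hs, Finsupp.le_of_le_nsmul_of_le_one_s9 (hS s hs) hle⟩

theorem isRadical_span_monomial_image [CommRing R] [IsReduced R]
    {S : Set (σ →₀ ℕ)} (hS : ∀ s ∈ S, ∀ i, s i ≤ 1) :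
    (Ideal.span ((fun s => monomial s (1 : R)) '' S)).IsRadical := by
  obtain ⟨m⟩ := MonomialOrder.nonempty σ
  set J := Ideal.span ((fun s => monomial s (1 : R)) '' S)
  suffices ∀ n (g : MvPolynomial σ R), g.support.card = n → g ∈ J.radical → g ∈ J from
    fun g hg => this _ g rfl hg
  intro n
  induction n using Nat.strong_induction_on with
  | _ n ih =>
    intro g hcard hg
    rcases eq_or_ne g 0 with rfl | hg0
    · exact J.zero_mem
    have hlead := leadingTerm_mem_of_mem_radical_span_monomial_image m hS hg
    have hrest : g - m.leadingTerm g ∈ J :=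
      ih _ (hcard ▸ m.card_support_sub_leadingTerm_lt hg0) _ rfl
        (J.radical.sub_mem hg (J.le_radical hlead))
    simpa using J.add_mem hrest hlead

end MvPolynomial

namespace CycleSuspension

open Finsupp (single)

variable {t : ℕ} {R : Type*} [CommSemiring R]

variable (t) in
noncomputable def cycleVertices : Fin t ⊕ Fin t →₀ ℕ :=
  ∑ i, single (.inl i) 1

@[simp]
theorem cycleVertices_inl (j : Fin t) : cycleVertices t (.inl j) = 1 := by
  simp [cycleVertices, Finsupp.single_apply]

@[simp]
theorem cycleVertices_inr (j : Fin t) : cycleVertices t (.inr j) = 0 := by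
  simp [cycleVertices]

theorem prod_X_inl :
    ∏ i : Fin t, (X (.inl i) : MvPolynomial (Fin t ⊕ Fin t) R) = monomial (cycleVertices t) 1 := by
  rw [cycleVertices, monomial_sum_one]
  rfl

noncomputable def pendantEdge (i : Fin t) : Fin t ⊕ Fin t →₀ ℕ :=
  single (.inl i) 1 + single (.inr i) 1

theorem X_mul_X_inr (i : Fin t) :
    (X (.inl i) * X (.inr i) : MvPolynomial (Fin t ⊕ Fin t) R) = monomial (pendantEdge i) 1 := by
  rw [X, X, monomial_mul, one_mul, pendantEdge]

theorem pendantEdge_tsub {w : ℕ} (hw : 2 ≤ w) (i : Fin t) :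
    pendantEdge i - (w - 1) • cycleVertices t = single (.inr i) 1 := by
  ext (j | j) <;> simp [pendantEdge, Finsupp.single_apply]
  split_ifs <;> omega

variable [NeZero t]

noncomputable def cycleEdge (i : Fin t) : Fin t ⊕ Fin t →₀ ℕ :=
  single (.inl i) 1 + single (.inl (i + 1)) 1

theorem X_mul_X_add_one (i : Fin t) :
    (X (.inl i) * X (.inl (i + 1)) : MvPolynomial (Fin t ⊕ Fin t) R) =
      monomial (cycleEdge i) 1 := by
  rw [X, X, monomial_mul, one_mul, cycleEdge]

theorem cycleEdge_le_one {i : Fin t} (hi : i ≠ i + 1) (a : Fin t ⊕ Fin t) : cycleEdge i a ≤ 1 := by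
  rcases a with j | j <;> simp [cycleEdge, Finsupp.single_apply]
  split_ifs <;> omega

theorem nsmul_cycleEdge_tsub {i : Fin t} (hi : i ≠ i + 1) {w : ℕ} (hw : 1 ≤ w) :
    w • cycleEdge i - (w - 1) • cycleVertices t = cycleEdge i := by
  ext (j | j) <;> simp [cycleEdge, Finsupp.single_apply]
  split_ifs <;> omega

end CycleSuspension

open CycleSuspension in
/-- Let `H` be the suspension of the cycle `C_t` (vertices
`x_i = X (inl i)`, `y_i = X (inr i)`, cycle edges `x_i x_{i+1}` of weight `w ≥ 2`
and pendant edges `x_i y_i` of weight `1`).  Then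
`√(I(H_w) : (x_1 ⋯ x_t)^{w-1}) = I(C_t) + (y_1,…,y_t)`. -/
theorem stmt9 (K : Type*) [Field K] (t : ℕ) [NeZero t] (ht : 3 ≤ t)
    (w : ℕ) (hw : 2 ≤ w) :
    (Submodule.colon
        (Ideal.span
          ({p | ∃ i : Fin t, p = ((X (Sum.inl i) * X (Sum.inl (i + 1)) :
              MvPolynomial (Fin t ⊕ Fin t) K)) ^ w}
            ∪ {p | ∃ i : Fin t, p = (X (Sum.inl i) * X (Sum.inr i) :
              MvPolynomial (Fin t ⊕ Fin t) K)}))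
        (Ideal.span {(∏ i : Fin t, (X (Sum.inl i) :
            MvPolynomial (Fin t ⊕ Fin t) K)) ^ (w - 1)})).radical
      = Ideal.span
          ({p | ∃ i : Fin t, p = (X (Sum.inl i) * X (Sum.inl (i + 1)) :
              MvPolynomial (Fin t ⊕ Fin t) K)}
            ∪ {p | ∃ i : Fin t, p = (X (Sum.inr i) :
              MvPolynomial (Fin t ⊕ Fin t) K)}) := by
  have hi : ∀ i : Fin t, i ≠ i + 1 := Fin.self_ne_add_one (by omega)
  simp only [X_mul_X_add_one, X_mul_X_inr, prod_X_inl, monomial_pow, one_pow,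
    setOf_exists_eq_monomial, setOf_exists_eq_X, ← Set.image_union, colon_span_monomial_image]
  have hshift : (· - (w - 1) • cycleVertices t) ''
        (Set.range (fun i => w • cycleEdge i) ∪ Set.range pendantEdge) =
      Set.range cycleEdge ∪ Set.range (fun i => Finsupp.single (Sum.inr i) 1) := by
    simp only [Set.image_union, ← Set.range_comp, Function.comp_def,
      nsmul_cycleEdge_tsub (hi _) (by omega : 1 ≤ w), pendantEdge_tsub hw]
  rw [hshift]
  refine (isRadical_span_monomial_image ?_).radical
  rintro _ (⟨i, rfl⟩ | ⟨i, rfl⟩) a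
  · exact cycleEdge_le_one (hi i) a
  · rw [Finsupp.single_apply]
    split_ifs <;> simp
end

section
/- Let W be a subset of the vertices of a simple graph G, define the weight function w on E(G) by w(e) = 2 if both endpoints of e lie in W and w(e) = 1 otherwise, and let x^a be the product of the variables in W. Then sqrt(I(G_w) : x^a) = I(G[W]) + (variables y not in W adjacent to some vertex of W) + I(G[W']), where W' is the set of vertices outside W not adjacent to any vertex of W. -/
/-!
Both ideals are monomial. Colon by a monomial `x^a` sends a generator `x^v` to `x^(v - a)`
(truncated subtraction), so the colon ideal is generated by `x_i x_j` for edges inside `W`,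
`x_j` for edges from `W` to `j ∉ W`, and `x_i x_j` for edges outside `W`; the last ones are
redundant unless both ends lie in `W'`. This is a squarefree monomial ideal, hence radical:
if no generator divides `x^d`, each generator involves a variable missing from `x^d`, so the
ideal lies in the prime `(x_i : d_i = 0)`, which contains no polynomial with `x^d` in its
support.
-/

open MvPolynomial

namespace MvPolynomial

variable {σ R : Type*}

theorem colon_span_monomial [CommSemiring R] (D : Set (σ →₀ ℕ)) (a : σ →₀ ℕ) :
    (Ideal.span ((fun v => monomial v (1 : R)) '' D)).colon
        (Ideal.span {monomial a (1 : R)} : Set (MvPolynomial σ R))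
      = Ideal.span ((fun v => monomial (v - a) (1 : R)) '' D) := by
  rw [← Set.image_image (fun v => monomial v (1 : R)) (· - a)]
  refine le_antisymm (fun f hf => ?_) (Ideal.span_le.2 ?_)
  · rw [Ideal.mem_colon_span_singleton, mem_ideal_span_monomial_image] at hf
    rw [mem_ideal_span_monomial_image]
    intro d hd
    obtain ⟨v, hv, hle⟩ := hf (d + a) (by
      rwa [mem_support_iff, coeff_mul_monomial, mul_one, ← mem_support_iff])
    exact ⟨v - a, ⟨v, hv, rfl⟩, tsub_le_iff_right.2 hle⟩
  · rintro _ ⟨_, ⟨v, hv, rfl⟩, rfl⟩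
    rw [SetLike.mem_coe, Ideal.mem_colon_span_singleton, monomial_mul, one_mul,
      mem_ideal_span_monomial_image]
    intro d hd
    exact ⟨v, hv, Finset.mem_singleton.1 (support_monomial_subset hd) ▸ le_tsub_add⟩

theorem prod_X_eq_monomial [CommSemiring R] (s : Finset σ) :
    ∏ i ∈ s, X i = monomial (∑ i ∈ s, Finsupp.single i 1) (1 : R) :=
  (monomial_sum_one s _).symm

theorem isPrime_span_X_image [CommRing R] [IsDomain R] (S : Set σ) :
    (Ideal.span (X '' S : Set (MvPolynomial σ R))).IsPrime := by
  classical
  set P := Ideal.span (X '' S : Set (MvPolynomial σ R))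
  let φ : MvPolynomial σ R →ₐ[R] MvPolynomial σ R :=
    aeval fun i => if i ∈ S then 0 else X i
  have hφ : (Ideal.Quotient.mkₐ R P).comp φ = Ideal.Quotient.mkₐ R P := by
    ext i
    by_cases hi : i ∈ S
    · simpa [φ, hi, eq_comm (a := (0 : _ ⧸ P)), Ideal.Quotient.eq_zero_iff_mem] using
        Ideal.subset_span (Set.mem_image_of_mem (X (R := R)) hi)
    · simp [φ, hi]
  suffices P = RingHom.ker φ from this ▸ RingHom.ker_isPrime φ
  refine le_antisymm (Ideal.span_le.2 ?_) fun f hf => ?_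
  · rintro _ ⟨i, hi, rfl⟩
    simp [φ, hi]
  · rw [← Ideal.Quotient.eq_zero_iff_mem, ← Ideal.Quotient.mkₐ_eq_mk R, ← hφ]
    simpa using congrArg (Ideal.Quotient.mkₐ R P) (RingHom.mem_ker.1 hf)

theorem radical_span_of_forall_eq_prod_X [CommRing R] [IsDomain R] {S : Set (MvPolynomial σ R)}
    (hS : ∀ p ∈ S, ∃ s : Finset σ, ∏ i ∈ s, X i = p) :
    (Ideal.span S).radical = Ideal.span S := by
  classical
  obtain ⟨D, hD, rfl⟩ : ∃ D : Set (σ →₀ ℕ),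
      (∀ v ∈ D, ∀ i, v i ≤ 1) ∧ (fun v => monomial v (1 : R)) '' D = S := by
    refine ⟨{v | (∀ i, v i ≤ 1) ∧ monomial v 1 ∈ S}, fun v hv => hv.1, ?_⟩
    refine Set.Subset.antisymm (Set.image_subset_iff.2 fun v hv => hv.2) fun p hp => ?_
    obtain ⟨s, rfl⟩ := hS p hp
    rw [prod_X_eq_monomial] at hp ⊢
    refine ⟨_, ⟨fun k => ?_, hp⟩, rfl⟩
    simp only [Finsupp.finsetSum_apply, Finsupp.single_apply, Finset.sum_ite_eq']
    exact ite_le_one le_rfl zero_le_one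
  refine le_antisymm (fun f hf => mem_ideal_span_monomial_image.2 fun d hd => ?_) Ideal.le_radical
  by_contra! hd_min
  have hle : Ideal.span ((fun v => monomial v (1 : R)) '' D)
      ≤ Ideal.span (X '' {i | d i = 0}) := by
    rw [Ideal.span_le]
    rintro _ ⟨v, hv, rfl⟩
    obtain ⟨i, hi⟩ : ∃ i, d i < v i := by simpa [Finsupp.le_def] using hd_min v hv
    refine mem_ideal_span_X_image.2 fun m hm => ?_
    rw [Finset.mem_singleton.1 (support_monomial_subset hm)]
    exact ⟨i, Nat.lt_one_iff.1 (hi.trans_le (hD v hv i)), by omega⟩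
  obtain ⟨i, hi, hdi⟩ := mem_ideal_span_X_image.1
    ((isPrime_span_X_image _).radical_le_iff.2 hle hf) d hd
  exact hdi hi

end MvPolynomial

namespace SimpleGraph

variable {V : Type*} [DecidableEq V] (G : SimpleGraph V) (W : Finset V)

def weightedEdgeExponents : Set (V →₀ ℕ) :=
  {v | ∃ i j, G.Adj i j ∧
    v = (if i ∈ W ∧ j ∈ W then 2 else 1) • (Finsupp.single i 1 + Finsupp.single j 1)}

theorem setOf_weightedEdge_eq_image (R : Type*) [CommSemiring R] :
    {p : MvPolynomial V R | ∃ i j, G.Adj i j ∧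
        p = (X i * X j) ^ (if i ∈ W ∧ j ∈ W then 2 else 1)}
      = (fun v => monomial v 1) '' G.weightedEdgeExponents W := by
  have hpow (i j : V) (k : ℕ) : (X i * X j : MvPolynomial V R) ^ k
      = monomial (k • (Finsupp.single i 1 + Finsupp.single j 1)) 1 := by
    rw [X, X, monomial_mul, monomial_pow, one_mul, one_pow]
  ext p
  simp only [weightedEdgeExponents, hpow, Set.mem_ofPred_eq, Set.mem_image]
  grind

variable {G W}

theorem monomial_weightedEdge_tsub (R : Type*) [CommSemiring R] {i j : V} (hij : i ≠ j) :
    monomial ((if i ∈ W ∧ j ∈ W then 2 else 1) • (Finsupp.single i 1 + Finsupp.single j 1)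
        - ∑ k ∈ W, Finsupp.single k 1) (1 : R)
      = (if i ∈ W ∧ j ∉ W then 1 else X i) * (if j ∈ W ∧ i ∉ W then 1 else X j) := by
  have hexp : (if i ∈ W ∧ j ∈ W then 2 else 1) • (Finsupp.single i 1 + Finsupp.single j 1)
        - ∑ k ∈ W, Finsupp.single k 1
      = (if i ∈ W ∧ j ∉ W then 0 else Finsupp.single i 1)
        + (if j ∈ W ∧ i ∉ W then 0 else Finsupp.single j 1) := by
    ext k
    by_cases hi : i ∈ W <;> by_cases hj : j ∈ W <;> by_cases hki : i = k <;>
      by_cases hkj : j = k <;> simp_all [Finsupp.single_apply]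
  rw [hexp, ← mul_one (1 : R), ← monomial_mul]
  split_ifs <;> rfl

theorem span_weightedEdge_tsub_eq (R : Type*) [CommSemiring R] :
    Ideal.span ((fun v => monomial (v - ∑ k ∈ W, Finsupp.single k 1) (1 : R)) ''
        G.weightedEdgeExponents W)
      = Ideal.span
          ({p : MvPolynomial V R | ∃ i j, i ∈ W ∧ j ∈ W ∧ G.Adj i j ∧ p = X i * X j}
            ∪ {p | ∃ j, j ∉ W ∧ (∃ i ∈ W, G.Adj i j) ∧ p = X j}
            ∪ {p | ∃ i j, i ∉ W ∧ j ∉ W ∧ (∀ k ∈ W, ¬ G.Adj k i) ∧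
              (∀ k ∈ W, ¬ G.Adj k j) ∧ G.Adj i j ∧ p = X i * X j}) := by
  refine le_antisymm (Ideal.span_le.2 ?_) (Ideal.span_le.2 fun p hp => ?_)
  · rintro _ ⟨_, ⟨i, j, hij, rfl⟩, rfl⟩
    dsimp only
    rw [SetLike.mem_coe, monomial_weightedEdge_tsub R hij.ne]
    by_cases hi : i ∈ W <;> by_cases hj : j ∈ W <;>
      simp only [hi, hj, not_true_eq_false, not_false_eq_true, and_self, and_true, and_false,
        ↓reduceIte, one_mul, mul_one]
    · exact Ideal.subset_span (Or.inl (Or.inl ⟨i, j, hi, hj, hij, rfl⟩))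
    · exact Ideal.subset_span (Or.inl (Or.inr ⟨j, hj, ⟨i, hi, hij⟩, rfl⟩))
    · exact Ideal.subset_span (Or.inl (Or.inr ⟨i, hi, ⟨j, hj, hij.symm⟩, rfl⟩))
    · by_cases hNi : ∃ k ∈ W, G.Adj k i
      · exact Ideal.mul_mem_right _ _ (Ideal.subset_span (Or.inl (Or.inr ⟨i, hi, hNi, rfl⟩)))
      by_cases hNj : ∃ k ∈ W, G.Adj k j
      · exact Ideal.mul_mem_left _ _ (Ideal.subset_span (Or.inl (Or.inr ⟨j, hj, hNj, rfl⟩)))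
      push Not at hNi hNj
      exact Ideal.subset_span (Or.inr ⟨i, j, hi, hj, hNi, hNj, hij, rfl⟩)
  · obtain ⟨i, j, hij, rfl⟩ : ∃ i j, G.Adj i j ∧
        (if i ∈ W ∧ j ∉ W then 1 else X i) * (if j ∈ W ∧ i ∉ W then 1 else X j) = p := by
      rcases hp with ((⟨i, j, hi, hj, hij, rfl⟩ | ⟨j, hj, ⟨i, hi, hij⟩, rfl⟩) |
        ⟨i, j, hi, hj, -, -, hij, rfl⟩) <;>
        exact ⟨i, j, hij, by simp [hi, hj]⟩
    rw [SetLike.mem_coe, ← monomial_weightedEdge_tsub R hij.ne]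
    exact Ideal.subset_span ⟨_, ⟨i, j, hij, rfl⟩, rfl⟩

end SimpleGraph

/-- For a vertex subset `W` of `G`, give weight `2` to edges
inside `W` and `1` to all other edges, and let `x^a = ∏_{i ∈ W} x_i`.  Then
`√(I(G_w) : x^a) = I(G[W]) + (variables outside W adjacent to W) + I(G[W'])`,
where `W'` is the set of vertices outside `W` not adjacent to any vertex of `W`. -/
theorem stmt15 (K : Type*) [Field K] (n : ℕ) (G : SimpleGraph (Fin n))
    (W : Finset (Fin n)) :
    (Submodule.colon
        (Ideal.span {p : MvPolynomial (Fin n) K | ∃ i j, G.Adj i j ∧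
          p = (X i * X j) ^ (if i ∈ W ∧ j ∈ W then 2 else 1)})
        (Ideal.span {∏ i ∈ W, (X i : MvPolynomial (Fin n) K)})).radical
      = Ideal.span
          ({p : MvPolynomial (Fin n) K | ∃ i j, i ∈ W ∧ j ∈ W ∧ G.Adj i j ∧
              p = X i * X j}
            ∪ {p | ∃ j, j ∉ W ∧ (∃ i ∈ W, G.Adj i j) ∧ p = X j}
            ∪ {p | ∃ i j, i ∉ W ∧ j ∉ W ∧ (∀ k ∈ W, ¬ G.Adj k i) ∧
              (∀ k ∈ W, ¬ G.Adj k j) ∧ G.Adj i j ∧ p = X i * X j}) := by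
  rw [G.setOf_weightedEdge_eq_image W K, prod_X_eq_monomial, colon_span_monomial,
    SimpleGraph.span_weightedEdge_tsub_eq K]
  refine radical_span_of_forall_eq_prod_X ?_
  rintro _ ((⟨i, j, -, -, hij, rfl⟩ | ⟨j, -, -, rfl⟩) | ⟨i, j, -, -, -, -, hij, rfl⟩)
  · exact ⟨{i, j}, Finset.prod_pair hij.ne⟩
  · exact ⟨{j}, Finset.prod_singleton _ _⟩
  · exact ⟨{i, j}, Finset.prod_pair hij.ne⟩
end

section
/- Let H be the graph on vertices {x_1,...,x_5,y_1,...,y_5} consisting of two 5-cycles x_1x_2x_3x_4x_5 and y_1y_2y_3y_4y_5 joined by the bridge x_1y_1, with weight function w. If w(x_1y_1) > w(y_1y_2), then, setting a = w(x_1y_1), b = w(y_1y_2), c = max(w(y_3y_4), w(y_4y_5)), one has sqrt(I(H_w) : y_1^{a-1} y_4^c) = I(H[{x_1,...,x_5,y_1}]) + (y_2, y_3, y_5). -/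
open MvPolynomial AddMonoidAlgebra Finsupp Sum

section Helpers
variable {σ K : Type*} [Field K]

-- helpers
lemma pair_le {u : σ →₀ ℕ} {a b : σ} (hab : a ≠ b) (ha : 1 ≤ u a) (hb : 1 ≤ u b) :
    Finsupp.single a 1 + Finsupp.single b 1 ≤ u := by
  classical
  rw [Finsupp.le_def]
  intro v
  simp only [Finsupp.add_apply, Finsupp.single_apply]
  rcases eq_or_ne a v with rfl | h1
  · rw [if_pos rfl, if_neg (Ne.symm hab)]; omega
  · rw [if_neg h1]
    rcases eq_or_ne b v with rfl | h2
    · rw [if_pos rfl]; omega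
    · rw [if_neg h2]; omega

lemma single_le {u : σ →₀ ℕ} {a : σ} (ha : 1 ≤ u a) : Finsupp.single a 1 ≤ u := by
  classical
  rw [Finsupp.le_def]
  intro v
  simp only [Finsupp.single_apply]
  split_ifs with h1
  · subst h1; omega
  · omega

lemma pair_sqfree {a b : σ} (hab : a ≠ b) :
    ∀ v, ((Finsupp.single a 1 + Finsupp.single b 1 : σ →₀ ℕ)) v ≤ 1 := by
  classical
  classical
  intro v
  simp only [Finsupp.add_apply, Finsupp.single_apply]
  rcases eq_or_ne a v with rfl | h1
  · rw [if_pos rfl, if_neg (Ne.symm hab)]; omega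
  · rw [if_neg h1]
    rcases eq_or_ne b v with rfl | h2
    · rw [if_pos rfl]
    · rw [if_neg h2]; omega

lemma single_sqfree (a : σ) : ∀ v, ((Finsupp.single a (1:ℕ) : σ →₀ ℕ)) v ≤ 1 := by
  classical
  intro v
  simp only [Finsupp.single_apply]
  split_ifs <;> omega

lemma XX_pow_eq (a b : σ) (w : ℕ) :
    ((X a * X b : MvPolynomial σ K)) ^ w
      = monomial (Finsupp.single a w + Finsupp.single b w) 1 := by
  classical
  rw [mul_pow, X_pow_eq_monomial, X_pow_eq_monomial, monomial_mul, one_mul]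

lemma XX_eq (a b : σ) :
    (X a * X b : MvPolynomial σ K)
      = monomial (Finsupp.single a 1 + Finsupp.single b 1) 1 := by
  rw [← pow_one (X a * X b), XX_pow_eq]

end Helpers

section LexPart
variable {σ K : Type*} [LinearOrder σ] [Field K]
variable {σ K : Type*} [LinearOrder σ] [Field K]

lemma supDegree_pow_toLex {f : MvPolynomial σ K} (hf : f ≠ 0) (n : ℕ) :
    (f ^ (n + 1)).supDegree toLex = (n + 1) • f.supDegree toLex := by
  induction n with
  | zero => simp
  | succ n ih =>
    have hfn : f ^ (n + 1) ≠ 0 := pow_ne_zero _ hf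
    have hlc : leadingCoeff toLex (f ^ (n+1)) * leadingCoeff toLex f ≠ 0 := by
      apply mul_ne_zero <;> rw [Ne, leadingCoeff_eq_zero toLex.injective] <;> assumption
    rw [pow_succ, supDegree_mul toLex.injective (fun _ _ => rfl) hlc hfn hf, ih]
    exact (succ_nsmul _ (n+1)).symm

lemma radical_span_monomial_sqfree {S : Set (σ →₀ ℕ)} (hS : ∀ s ∈ S, ∀ v, s v ≤ 1) :
    (Ideal.span ((fun s => monomial s (1 : K)) '' S)).radical
      = Ideal.span ((fun s => monomial s (1 : K)) '' S) := by
  set M := Ideal.span ((fun s => monomial s (1 : K)) '' S) with hM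
  apply le_antisymm _ Ideal.le_radical
  intro f hf
  obtain ⟨n, hn⟩ := hf
  rcases n with _ | m
  · rw [pow_zero] at hn
    have : M = ⊤ := (Ideal.eq_top_iff_one M).mpr hn
    rw [this]; trivial
  · -- strong induction on support card
    suffices H : ∀ N : ℕ, ∀ f : MvPolynomial σ K, f.support.card ≤ N →
        f ^ (m + 1) ∈ M → f ∈ M from H f.support.card f le_rfl hn
    intro N
    induction N with
    | zero =>
      intro f hcard _
      have : f = 0 := by
        rwa [Nat.le_zero, Finset.card_eq_zero, MvPolynomial.support_eq_empty] at hcard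
      simpa [this] using M.zero_mem
    | succ N ih =>
      intro f hcard hpow
      by_cases hf0 : f = 0
      · simpa [hf0] using M.zero_mem
      obtain ⟨a, ha, he⟩ := exists_supDegree_mem_support (⇑toLex) hf0
      have hfn : f ^ (m + 1) ≠ 0 := pow_ne_zero _ hf0
      have hsd : (f ^ (m + 1)).supDegree toLex = toLex ((m + 1) • a) := by
        rw [supDegree_pow_toLex hf0, he]; rfl
      obtain ⟨b, hb, he2⟩ := exists_supDegree_mem_support (⇑toLex) hfn
      have hba : b = (m + 1) • a := toLex.injective (by rw [← he2, hsd])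
      obtain ⟨s, hsS, hsle⟩ := mem_ideal_span_monomial_image.mp hpow b hb
      have hsa : s ≤ a := by
        intro v
        have h1 := hsle v
        rw [hba, Finsupp.smul_apply, smul_eq_mul] at h1
        have h2 := hS s hsS v
        rcases Nat.eq_zero_or_pos (a v) with h | h
        · rw [h, mul_zero] at h1; omega
        · exact le_trans h2 h
      set g : MvPolynomial σ K := monomial a (f.coeff a) with hg
      have hgM : g ∈ M := by
        have : g = monomial s 1 * monomial (a - s) (f.coeff a) := by
          rw [monomial_mul, one_mul, add_tsub_cancel_of_le hsa]
        rw [this]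
        exact M.mul_mem_right _ (Ideal.subset_span ⟨s, hsS, rfl⟩)
      set f' : MvPolynomial σ K := f - g with hf'
      have hsub : f'.support ⊆ f.support.erase a := by
        intro v hv
        rw [MvPolynomial.mem_support_iff] at hv
        rw [hf', hg, coeff_sub, coeff_monomial] at hv
        rcases eq_or_ne v a with rfl | hne
        · simp at hv
        · rw [if_neg (Ne.symm hne), sub_zero] at hv
          exact Finset.mem_erase.mpr ⟨hne, MvPolynomial.mem_support_iff.mpr hv⟩
      have hcard' : f'.support.card ≤ N := by
        have h1 := Finset.card_le_card hsub
        have h2 := Finset.card_erase_of_mem ha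
        have h3 : 0 < f.support.card := Finset.card_pos.mpr ⟨a, ha⟩
        calc f'.support.card ≤ (f.support.erase a).card := h1
          _ = f.support.card - 1 := h2
          _ ≤ N := by omega
      have hpow' : f' ^ (m + 1) ∈ M := by
        rw [← Ideal.Quotient.eq_zero_iff_mem, map_pow]
        have : Ideal.Quotient.mk M f' = Ideal.Quotient.mk M f := by
          rw [hf', RingHom.map_sub, Ideal.Quotient.eq_zero_iff_mem.mpr hgM, sub_zero]
        rw [this, ← map_pow, Ideal.Quotient.eq_zero_iff_mem]
        exact hpow
      have hf'M : f' ∈ M := ih f' hcard' hpow'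
      have : f = f' + g := by rw [hf']; ring
      rw [this]
      exact M.add_mem hf'M hgM

end LexPart
open MvPolynomial AddMonoidAlgebra Sum

noncomputable section Stmt18Aux

abbrev VV : Type := Fin 5 ⊕ Fin 5

def linV : LinearOrder VV := LinearOrder.lift' (Sum.elim (fun i : Fin 5 => (i : ℕ)) (fun i => (i : ℕ) + 5)) (by decide)

variable (wx wy : Fin 5 → ℕ) (wb : ℕ)

def eX (i : Fin 5) : VV →₀ ℕ :=
  Finsupp.single (inl i) (wx i) + Finsupp.single (inl (i + 1)) (wx i)

def eY (i : Fin 5) : VV →₀ ℕ :=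
  Finsupp.single (inr i) (wy i) + Finsupp.single (inr (i + 1)) (wy i)

def eB : VV →₀ ℕ := Finsupp.single (inl 0) wb + Finsupp.single (inr 0) wb

def dm : VV →₀ ℕ :=
  Finsupp.single (inr 0) (wb - 1) + Finsupp.single (inr 3) (max (wy 2) (wy 3))

def tX (i : Fin 5) : VV →₀ ℕ :=
  Finsupp.single (inl i) 1 + Finsupp.single (inl (i + 1)) 1

def tB : VV →₀ ℕ := Finsupp.single (inl 0) 1 + Finsupp.single (inr 0) 1

def SI : Set (VV →₀ ℕ) :=
  {d | ∃ i, d = eX wx i} ∪ {d | ∃ i, d = eY wy i} ∪ {eB wb}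

def SR : Set (VV →₀ ℕ) :=
  {d | ∃ i, d = tX i} ∪
    {tB, Finsupp.single (inr 1) 1, Finsupp.single (inr 2) 1, Finsupp.single (inr 4) 1}

end Stmt18Aux

section Main

variable {K : Type*} [Field K] {wx wy : Fin 5 → ℕ} {wb : ℕ}

lemma hne5 : ∀ i : Fin 5, i + 1 ≠ i := by decide

lemma inl_ne_inl (i : Fin 5) : (inl i : VV) ≠ inl (i + 1) := by
  simp only [ne_eq, inl.injEq]
  exact fun h => hne5 i h.symm

lemma colon_sub (hx : ∀ i, 0 < wx i) (hy : ∀ i, 0 < wy i) (hb : 0 < wb) :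
    Submodule.colon
        (Ideal.span ((fun s => monomial s (1 : K)) '' SI wx wy wb))
        (Ideal.span {(monomial (dm wy wb) 1 : MvPolynomial VV K)})
      ≤ Ideal.span ((fun s => monomial s (1 : K)) '' SR) := by
  intro f hf
  rw [Ideal.mem_colon_span_singleton] at hf
  rw [mem_ideal_span_monomial_image] at hf ⊢
  intro u hu
  have hu' : u + dm wy wb ∈ (f * monomial (dm wy wb) 1).support := by
    rw [MvPolynomial.mem_support_iff, coeff_mul_monomial, mul_one]
    exact MvPolynomial.mem_support_iff.mp hu
  obtain ⟨s, hsSI, hle⟩ := hf _ hu'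
  rw [Finsupp.le_def] at hle
  simp only [Finsupp.add_apply] at hle
  rcases hsSI with (⟨i, rfl⟩ | ⟨i, rfl⟩) | hsB
  · -- x-cycle edge
    have h1 := hle (inl i)
    have h2 := hle (inl (i + 1))
    simp only [eX, dm, Finsupp.add_apply, Finsupp.single_apply] at h1 h2
    simp [hne5 i, hne5 i |>.symm] at h1 h2
    refine ⟨tX i, Or.inl ⟨i, rfl⟩, pair_le (inl_ne_inl i) ?_ ?_⟩
    · have := hx i; omega
    · have := hx i; omega
  · -- y-cycle edge
    fin_cases i
    · have h := hle (inr 1)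
      simp only [eY, dm, Finsupp.add_apply, Finsupp.single_apply] at h
      simp at h
      exact ⟨Finsupp.single (inr 1) 1, Or.inr (by simp [SR]),
        single_le (by have := hy 0; omega)⟩
    · have h := hle (inr 1)
      simp only [eY, dm, Finsupp.add_apply, Finsupp.single_apply] at h
      simp at h
      exact ⟨Finsupp.single (inr 1) 1, Or.inr (by simp [SR]),
        single_le (by have := hy 1; omega)⟩
    · have h := hle (inr 2)
      simp only [eY, dm, Finsupp.add_apply, Finsupp.single_apply] at h
      simp at h
      exact ⟨Finsupp.single (inr 2) 1, Or.inr (by simp [SR]),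
        single_le (by have := hy 2; omega)⟩
    · have h := hle (inr 4)
      simp only [eY, dm, Finsupp.add_apply, Finsupp.single_apply] at h
      simp at h
      exact ⟨Finsupp.single (inr 4) 1, Or.inr (by simp [SR]),
        single_le (by have := hy 3; omega)⟩
    · have h := hle (inr 4)
      simp only [eY, dm, Finsupp.add_apply, Finsupp.single_apply] at h
      simp at h
      exact ⟨Finsupp.single (inr 4) 1, Or.inr (by simp [SR]),
        single_le (by have := hy 4; omega)⟩
  · -- bridge
    rw [Set.mem_singleton_iff] at hsB
    subst hsB
    have h1 := hle (inl 0)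
    have h2 := hle (inr 0)
    simp only [eB, dm, Finsupp.add_apply, Finsupp.single_apply] at h1 h2
    simp at h1 h2
    exact ⟨tB, Or.inr (Set.mem_insert _ _), pair_le (by decide) (by omega) (by omega)⟩

end Main

section Main2

variable {K : Type*} [Field K] {wx wy : Fin 5 → ℕ} {wb : ℕ}

lemma gens_in_rad (hx : ∀ i, 0 < wx i) (hy : ∀ i, 0 < wy i) (hb : 0 < wb)
    (hcond : wy 0 < wb) :
    ∀ t ∈ SR, (monomial t (1 : K)) ∈
      (Submodule.colon
        (Ideal.span ((fun s => monomial s (1 : K)) '' SI wx wy wb))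
        (Ideal.span {(monomial (dm wy wb) 1 : MvPolynomial VV K)})).radical := by
  have key : ∀ (t' : VV →₀ ℕ) (k : ℕ) (e r : VV →₀ ℕ), e ∈ SI wx wy wb →
      k • t' + dm wy wb = e + r →
      (monomial t' (1 : K)) ∈
        (Submodule.colon
          (Ideal.span ((fun s => monomial s (1 : K)) '' SI wx wy wb))
          (Ideal.span {(monomial (dm wy wb) 1 : MvPolynomial VV K)})).radical := by
    intro t' k e r he hsum
    refine ⟨k, ?_⟩
    rw [Ideal.mem_colon_span_singleton]
    have heq : (monomial t' (1:K)) ^ k * monomial (dm wy wb) 1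
        = monomial r 1 * monomial e 1 := by
      rw [monomial_pow, one_pow, monomial_mul, monomial_mul, one_mul, hsum, add_comm e r]
    rw [heq]
    exact Ideal.mul_mem_left _ _ (Ideal.subset_span ⟨e, he, rfl⟩)
  rintro t (⟨i, rfl⟩ | ht)
  · refine key (tX i) (wx i) (eX wx i) (dm wy wb) (Or.inl (Or.inl ⟨i, rfl⟩)) ?_
    rw [tX, eX, smul_add, Finsupp.smul_single, Finsupp.smul_single, smul_eq_mul, mul_one]
  · simp only [Set.mem_insert_iff, Set.mem_singleton_iff] at ht
    rcases ht with rfl | rfl | rfl | rfl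
    · refine key tB wb (eB wb) (dm wy wb) (Or.inr rfl) ?_
      rw [tB, eB, smul_add, Finsupp.smul_single, Finsupp.smul_single, smul_eq_mul, mul_one]
    · refine key _ (wy 0) (eY wy 0)
        (Finsupp.single (inr 0) (wb - 1 - wy 0) + Finsupp.single (inr 3) (max (wy 2) (wy 3)))
        (Or.inl (Or.inr ⟨0, rfl⟩)) ?_
      ext v
      rcases v with j | j <;> fin_cases j <;>
        simp [eY, dm, Finsupp.single_apply] <;> omega
    · refine key _ (wy 2) (eY wy 2)
        (Finsupp.single (inr 0) (wb - 1) + Finsupp.single (inr 3) (max (wy 2) (wy 3) - wy 2))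
        (Or.inl (Or.inr ⟨2, rfl⟩)) ?_
      ext v
      rcases v with j | j <;> fin_cases j <;>
        simp [eY, dm, Finsupp.single_apply] <;> omega
    · refine key _ (wy 3) (eY wy 3)
        (Finsupp.single (inr 0) (wb - 1) + Finsupp.single (inr 3) (max (wy 2) (wy 3) - wy 3))
        (Or.inl (Or.inr ⟨3, rfl⟩)) ?_
      ext v
      rcases v with j | j <;> fin_cases j <;>
        simp [eY, dm, Finsupp.single_apply] <;> omega

lemma SR_sqfree : ∀ s ∈ SR, ∀ v, s v ≤ 1 := by
  rintro s (⟨i, rfl⟩ | hs) v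
  · exact pair_sqfree (inl_ne_inl i) v
  · simp only [Set.mem_insert_iff, Set.mem_singleton_iff] at hs
    rcases hs with rfl | rfl | rfl | rfl
    · exact pair_sqfree (by decide) v
    · exact single_sqfree _ v
    · exact single_sqfree _ v
    · exact single_sqfree _ v

lemma monomial_single_one_eq (a : VV) : monomial (Finsupp.single a 1) (1:K) = X a := by
  rw [← pow_one (X a : MvPolynomial VV K), X_pow_eq_monomial]

end Main2

/-- Let `H` consist of two `5`-cycles `x_1⋯x_5` and `y_1⋯y_5`
joined by the bridge `x_1y_1` (here `x_i = X (inl (i-1))`, `y_i = X (inr (i-1))`),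
with edge weights `wx i` on `x_{i+1}x_{i+2}`, `wy i` on `y_{i+1}y_{i+2}` and `wb`
on the bridge.  If `wb > wy 0 (= w(y_1y_2))`, then, with `a = wb` and
`c = max (w(y_3y_4)) (w(y_4y_5))`,
`√(I(H_w) : y_1^{a-1} y_4^c) = I(H[{x_1,…,x_5,y_1}]) + (y_2, y_3, y_5)`. -/
theorem stmt18 (K : Type*) [Field K] (wx wy : Fin 5 → ℕ) (wb : ℕ)
    (hx : ∀ i, 0 < wx i) (hy : ∀ i, 0 < wy i) (hb : 0 < wb)
    (hcond : wy 0 < wb) :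
    (Submodule.colon
        (Ideal.span
          ({p : MvPolynomial (Fin 5 ⊕ Fin 5) K |
              ∃ i : Fin 5, p = (X (Sum.inl i) * X (Sum.inl (i + 1))) ^ wx i}
            ∪ {p | ∃ i : Fin 5, p = (X (Sum.inr i) * X (Sum.inr (i + 1))) ^ wy i}
            ∪ {(X (Sum.inl 0) * X (Sum.inr 0) : MvPolynomial (Fin 5 ⊕ Fin 5) K) ^ wb}))
        (Ideal.span {(X (Sum.inr 0) : MvPolynomial (Fin 5 ⊕ Fin 5) K) ^ (wb - 1) *
            X (Sum.inr 3) ^ max (wy 2) (wy 3)})).radical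
      = Ideal.span
          ({p : MvPolynomial (Fin 5 ⊕ Fin 5) K |
              ∃ i : Fin 5, p = X (Sum.inl i) * X (Sum.inl (i + 1))}
            ∪ {X (Sum.inl 0) * X (Sum.inr 0),
               (X (Sum.inr 1) : MvPolynomial (Fin 5 ⊕ Fin 5) K),
               X (Sum.inr 2), X (Sum.inr 4)}) := by
  have hIset :
      ({p : MvPolynomial (Fin 5 ⊕ Fin 5) K |
          ∃ i : Fin 5, p = (X (Sum.inl i) * X (Sum.inl (i + 1))) ^ wx i}
        ∪ {p | ∃ i : Fin 5, p = (X (Sum.inr i) * X (Sum.inr (i + 1))) ^ wy i}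
        ∪ {(X (Sum.inl 0) * X (Sum.inr 0) : MvPolynomial (Fin 5 ⊕ Fin 5) K) ^ wb})
        = (fun s => monomial s (1 : K)) '' SI wx wy wb := by
    rw [SI, Set.image_union, Set.image_union, Set.image_singleton]
    congr 1
    congr 1
    · ext p
      constructor
      · rintro ⟨i, rfl⟩
        exact ⟨eX wx i, ⟨i, rfl⟩, (XX_pow_eq _ _ _).symm⟩
      · rintro ⟨d, ⟨i, rfl⟩, rfl⟩
        exact ⟨i, (XX_pow_eq _ _ _).symm⟩
    · ext p
      constructor
      · rintro ⟨i, rfl⟩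
        exact ⟨eY wy i, ⟨i, rfl⟩, (XX_pow_eq _ _ _).symm⟩
      · rintro ⟨d, ⟨i, rfl⟩, rfl⟩
        exact ⟨i, (XX_pow_eq _ _ _).symm⟩
    · rw [eB, ← XX_pow_eq]
  have hm : (X (Sum.inr 0) : MvPolynomial (Fin 5 ⊕ Fin 5) K) ^ (wb - 1) *
        X (Sum.inr 3) ^ max (wy 2) (wy 3) = monomial (dm wy wb) 1 := by
    rw [dm, X_pow_eq_monomial, X_pow_eq_monomial, monomial_mul, one_mul]
  have hRset :
      ({p : MvPolynomial (Fin 5 ⊕ Fin 5) K |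
          ∃ i : Fin 5, p = X (Sum.inl i) * X (Sum.inl (i + 1))}
        ∪ {X (Sum.inl 0) * X (Sum.inr 0),
           (X (Sum.inr 1) : MvPolynomial (Fin 5 ⊕ Fin 5) K),
           X (Sum.inr 2), X (Sum.inr 4)})
        = (fun s => monomial s (1 : K)) '' SR := by
    rw [SR, Set.image_union]
    congr 1
    · ext p
      constructor
      · rintro ⟨i, rfl⟩
        exact ⟨tX i, ⟨i, rfl⟩, (XX_eq _ _).symm⟩
      · rintro ⟨d, ⟨i, rfl⟩, rfl⟩
        exact ⟨i, (XX_eq _ _).symm⟩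
    · rw [Set.image_insert_eq, Set.image_insert_eq, Set.image_insert_eq,
        Set.image_singleton]
      rw [tB, ← XX_eq, monomial_single_one_eq, monomial_single_one_eq,
        monomial_single_one_eq]
  rw [hIset, hm, hRset]
  letI : LinearOrder VV := linV
  apply le_antisymm
  · calc (Submodule.colon
          (Ideal.span ((fun s => monomial s (1 : K)) '' SI wx wy wb))
          (Ideal.span {(monomial (dm wy wb) 1 : MvPolynomial VV K)})).radical
        ≤ (Ideal.span ((fun s => monomial s (1 : K)) '' SR)).radical :=
          Ideal.radical_mono (colon_sub hx hy hb)
      _ = Ideal.span ((fun s => monomial s (1 : K)) '' SR) :=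
          radical_span_monomial_sqfree SR_sqfree
  · rw [Ideal.span_le]
    rintro _ ⟨t, ht, rfl⟩
    exact gens_in_rad hx hy hb hcond t ht
end
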